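/- Let n ≥ 3 and let f = (f_0, …, f_n) be a non-degenerate symmetric signature of arity n. Suppose f satisfies a second order recurrence relation with coefficients (a, b, c) ∈ ℂ³ (not all zero) and also satisfies one with coefficients (a', b', c') ∈ ℂ³ (not all zero). Then there exists a nonzero k ∈ ℂ such that (a, b, c) = k·(a', b', c'). -/

import Mathlib

/-!
Every window `(f k, f (k+1), f (k+2))` is orthogonal, for the bilinear dot product, to each
recurrence `(a, b, c)` satisfied by `f`. If two recurrences `u`, `u'` were not proportional, every
window would be a multiple of `w = u × u'`; overlapping windows then force a single first order
relation `p f (j+1) = q f j` with `(p, q) ≠ 0`, whence `f k = λ p ^ (n - k) q ^ k` and `f` is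
degenerate.
-/

open Matrix

def window {α : Type*} (f : ℕ → α) (k : ℕ) : Fin 3 → α := ![f k, f (k + 1), f (k + 2)]

section CommRing

variable {R : Type*} [CommRing R]

lemma window_dotProduct (f : ℕ → R) (k : ℕ) (a b c : R) :
    window f k ⬝ᵥ ![a, b, c] = a * f k + b * f (k + 1) + c * f (k + 2) := by
  simp only [window, dotProduct_cons, head_cons, tail_cons, dotProduct_of_isEmpty, add_zero]
  ring

lemma cross_cross_eq_zero_of_dotProduct_eq_zero {v u u' : Fin 3 → R}
    (hu : v ⬝ᵥ u = 0) (hu' : v ⬝ᵥ u' = 0) : v ⨯₃ (u ⨯₃ u') = 0 := by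
  rw [cross_cross_eq_smul_sub_smul', hu', dotProduct_comm, hu, zero_smul, zero_smul, sub_zero]

lemma pow_mul_eq_pow_mul_of_mul_succ_eq {f : ℕ → R} {p q : R} {n : ℕ}
    (h : ∀ j < n, p * f (j + 1) = q * f j) : ∀ k ≤ n, p ^ k * f k = q ^ k * f 0
  | 0, _ => by simp
  | k + 1, hk => by
    linear_combination p ^ k * h k hk + q * pow_mul_eq_pow_mul_of_mul_succ_eq h k (by omega)

end CommRing

section Field

variable {K : Type*} [Field K]

lemma exists_smul_eq_of_cross_eq_zero {u u' : Fin 3 → K} (h : u ⨯₃ u' = 0) (hu : u ≠ 0)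
    (hu' : u' ≠ 0) : ∃ k : K, k ≠ 0 ∧ u = k • u' := by
  have hdep : ¬ LinearIndependent K ![u', u] := by
    rw [← crossProduct_ne_zero_iff_linearIndependent, not_not, ← cross_anticomm, h, neg_zero]
  obtain ⟨k, rfl⟩ : ∃ k : K, k • u' = u := by
    simpa [LinearIndependent.pair_iff' hu'] using hdep
  exact ⟨k, by rintro rfl; simp at hu, rfl⟩

lemma exists_eq_mul_pow_mul_pow_of_mul_succ_eq {f : ℕ → K} {p q : K} {n : ℕ} (hpq : (p, q) ≠ 0)
    (h : ∀ j < n, p * f (j + 1) = q * f j) :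
    ∃ c : K, ∀ k ≤ n, f k = c * p ^ (n - k) * q ^ k := by
  by_cases hp : p = 0
  · have hq : q ≠ 0 := by rintro rfl; simp [hp] at hpq
    refine ⟨f n / q ^ n, fun k hk => ?_⟩
    rcases hk.lt_or_eq with hk | rfl
    · have : f k = 0 := by simpa [hp, hq] using (h k hk).symm
      simp [hp, this, Nat.sub_ne_zero_of_lt hk]
    · field_simp
      simp
  · refine ⟨f 0 / p ^ n, fun k hk => ?_⟩
    obtain ⟨m, rfl⟩ := Nat.exists_eq_add_of_le hk
    rw [Nat.add_sub_cancel_left, pow_add]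
    field_simp
    linear_combination pow_mul_eq_pow_mul_of_mul_succ_eq h k hk

lemma exists_eq_pow_mul_pow_of_mul_succ_eq [IsAlgClosed K] {f : ℕ → K} {p q : K} {n : ℕ}
    (hn : n ≠ 0) (hpq : (p, q) ≠ 0) (h : ∀ j < n, p * f (j + 1) = q * f j) :
    ∃ α β : K, ∀ k ≤ n, f k = α ^ (n - k) * β ^ k := by
  obtain ⟨c, hc⟩ := exists_eq_mul_pow_mul_pow_of_mul_succ_eq hpq h
  obtain ⟨μ, rfl⟩ := IsAlgClosed.exists_pow_nat_eq c (Nat.pos_of_ne_zero hn)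
  refine ⟨μ * p, μ * q, fun k hk => ?_⟩
  obtain ⟨m, rfl⟩ := Nat.exists_eq_add_of_le hk
  rw [hc _ hk, Nat.add_sub_cancel_left]
  ring

lemma exists_mul_succ_eq_of_window_cross_eq_zero {f : ℕ → K} {w : Fin 3 → K} {n : ℕ}
    (hn : 3 ≤ n) (hw : w ≠ 0) (h : ∀ k, k + 2 ≤ n → window f k ⨯₃ w = 0) :
    ∃ p q : K, (p, q) ≠ 0 ∧ ∀ j < n, p * f (j + 1) = q * f j := by
  have hwin : ∀ k, k + 2 ≤ n → f (k + 1) * w 2 = f (k + 2) * w 1 ∧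
      f (k + 2) * w 0 = f k * w 2 ∧ f k * w 1 = f (k + 1) * w 0 := fun k hk => by
    simpa [window, cross_apply, sub_eq_zero] using h k hk
  by_cases h01 : (w 0, w 1) = 0
  · obtain ⟨hw0, hw1⟩ := Prod.mk_eq_zero.mp h01
    have hw2 : w 2 ≠ 0 := fun hw2 => hw (by ext i; fin_cases i <;> assumption)
    refine ⟨0, 1, by simp, fun j hj => ?_⟩
    suffices f j = 0 by simp [this]
    rcases j with _ | i
    · simpa [hw0, hw2] using (hwin 0 (by omega)).2.1
    · simpa [hw1, hw2] using (hwin i (by omega)).1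
  · refine ⟨w 0, w 1, h01, fun j hj => ?_⟩
    rcases (by omega : j + 2 ≤ n ∨ j + 1 = n) with hj | rfl
    · linear_combination -(hwin j hj).2.2
    · obtain ⟨m, rfl⟩ : ∃ m, j = m + 2 := ⟨j - 2, by omega⟩
      -- the last pair goes through `w 2 * f (m + 1)`, shared by the last two windows
      linear_combination (hwin (m + 1) (by omega)).2.1 + (hwin m (by omega)).1

end Field

theorem stmt_0 (n : ℕ) (hn : 3 ≤ n) (f : ℕ → ℂ)
    (hnd : ¬ ∃ a b : ℂ, ∀ k ≤ n, f k = a ^ (n - k) * b ^ k)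
    (a b c : ℂ) (habc : (a, b, c) ≠ 0)
    (hrec : ∀ k, k + 2 ≤ n → a * f k + b * f (k + 1) + c * f (k + 2) = 0)
    (a' b' c' : ℂ) (habc' : (a', b', c') ≠ 0)
    (hrec' : ∀ k, k + 2 ≤ n → a' * f k + b' * f (k + 1) + c' * f (k + 2) = 0) :
    ∃ k : ℂ, k ≠ 0 ∧ a = k * a' ∧ b = k * b' ∧ c = k * c' := by
  have hcross : ![a, b, c] ⨯₃ ![a', b', c'] = 0 := by
    by_contra hw
    have hwindow : ∀ k, k + 2 ≤ n → window f k ⨯₃ (![a, b, c] ⨯₃ ![a', b', c']) = 0 :=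
      fun k hk => cross_cross_eq_zero_of_dotProduct_eq_zero
        ((window_dotProduct f k a b c).trans (hrec k hk))
        ((window_dotProduct f k a' b' c').trans (hrec' k hk))
    obtain ⟨p, q, hpq, hpf⟩ := exists_mul_succ_eq_of_window_cross_eq_zero hn hw hwindow
    exact hnd (exists_eq_pow_mul_pow_of_mul_succ_eq (by omega) hpq hpf)
  obtain ⟨k, hk, hprop⟩ := exists_smul_eq_of_cross_eq_zero hcross
    (by simpa [Prod.ext_iff] using habc) (by simpa [Prod.ext_iff] using habc')
  exact ⟨k, hk, by simpa using congrFun hprop 0, by simpa using congrFun hprop 1,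
    by simpa using congrFun hprop 2⟩
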